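/- arXiv:1910.09268 — 5 statements merged into one kernel-verified Lean document; each statement's English description precedes it below -/
import Mathlib

section
/- The strong critical ancestors of a fixed buyer h (connected to s) are totally ordered by the relation 'is a strong critical ancestor of': for any two distinct strong critical ancestors j, k of h, either j is a strong critical ancestor of k or k is a strong critical ancestor of j. -/
/-- The set of buyers still connected to the seller `s` after removing the set `D`:
vertices `y ≠ s`, `y ∉ D`, admitting a walk from `s` avoiding `D`. -/
def remConn {V : Type*} (G : SimpleGraph V) (s : V) (D : Set V) : Set V :=
  {y | y ≠ s ∧ y ∉ D ∧ ∃ p : G.Walk s y, ∀ d ∈ D, d ∉ p.support}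

/-- The highest reported valuation among buyers still connected to `s` after removing `D`
(`0` if there are none). -/
noncomputable def v1 {V : Type*} (G : SimpleGraph V) (s : V) (v : V → ℝ) (D : Set V) : ℝ :=
  sSup (insert 0 (v '' remConn G s D))

/-- `D` is a cut set of buyer `i`: every walk from the seller `s` to `i` meets `D`. -/
def isCutSet {V : Type*} (G : SimpleGraph V) (s i : V) (D : Set V) : Prop :=
  ∀ p : G.Walk s i, ∃ d ∈ D, d ∈ p.support

/-- `j` is a strong critical ancestor of `i`: `j` is a buyer distinct from `i`
lying on every walk from the seller `s` to `i`. -/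
def isSCA {V : Type*} (G : SimpleGraph V) (s i j : V) : Prop :=
  j ≠ i ∧ j ≠ s ∧ ∀ p : G.Walk s i, j ∈ p.support

/-- The critical descendant set of `x`: buyers `y` such that every walk from `s` to `y`
passes through `x`, together with `x` itself. -/
def critDesc {V : Type*} (G : SimpleGraph V) (s x : V) : Set V :=
  {y | ∀ p : G.Walk s y, x ∈ p.support} ∪ {x}

/- If `j` and `k` each lie on every walk from the other to `h`, a walk from `k` to `h` yields a
strictly shorter one from `j` to `h` (drop everything before `j`), and vice versa: infinite
descent. Two incomparable strong critical ancestors of `h` would be in exactly this situation,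
since a walk from `s` to `k` avoiding `j` can be continued by any walk from `k` to `h`. -/

namespace SimpleGraph

variable {V : Type*} {G : SimpleGraph V}

theorem Walk.mem_support_of_append_not_mem {s k h j : V}
    (hj : ∀ p : G.Walk s h, j ∈ p.support) (q : G.Walk s k) (hq : j ∉ q.support)
    (r : G.Walk k h) : j ∈ r.support := by
  simpa [Walk.mem_support_append_iff, hq] using hj (q.append r)

open Classical in
theorem Walk.false_of_forall_mem_support_of_forall_mem_support {a b t : V} (hab : a ≠ b)
    (ha : ∀ r : G.Walk a t, b ∈ r.support) (hb : ∀ r : G.Walk b t, a ∈ r.support)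
    (r : G.Walk a t) : False :=
  false_of_forall_mem_support_of_forall_mem_support hab.symm hb ha (r.dropUntil b (ha r))
termination_by r.length
decreasing_by exact Walk.length_dropUntil_lt_length (ha r) hab.symm

end SimpleGraph

theorem exists_walk_not_mem_support_of_not_isSCA {V : Type*} {G : SimpleGraph V} {s i j : V}
    (hji : j ≠ i) (hjs : j ≠ s) (hnot : ¬ isSCA G s i j) :
    ∃ q : G.Walk s i, j ∉ q.support := by
  by_contra! hall
  exact hnot ⟨hji, hjs, hall⟩

theorem sca_totally_ordered_general {V : Type*}
    (G : SimpleGraph V) (s h : V) (hreach : G.Reachable s h)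
    (j k : V) (hj : isSCA G s h j) (hk : isSCA G s h k) (hjk : j ≠ k) :
    isSCA G s k j ∨ isSCA G s j k := by
  by_contra! hcon
  obtain ⟨q₁, hq₁⟩ := exists_walk_not_mem_support_of_not_isSCA hjk hj.2.1 hcon.1
  obtain ⟨q₂, hq₂⟩ := exists_walk_not_mem_support_of_not_isSCA hjk.symm hk.2.1 hcon.2
  obtain ⟨r⟩ : G.Reachable k h := q₁.reachable.symm.trans hreach
  exact SimpleGraph.Walk.false_of_forall_mem_support_of_forall_mem_support hjk.symm
    (SimpleGraph.Walk.mem_support_of_append_not_mem hj.2.2 q₁ hq₁)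
    (SimpleGraph.Walk.mem_support_of_append_not_mem hk.2.2 q₂ hq₂) r

/-- The strong critical ancestors of a fixed buyer `h` are totally ordered by the
strong-critical-ancestor relation. -/
theorem sca_totally_ordered {V : Type*} [Fintype V]
    (G : SimpleGraph V) (s h : V) (hreach : G.Reachable s h)
    (j k : V) (hj : isSCA G s h j) (hk : isSCA G s h k) (hjk : j ≠ k) :
    isSCA G s k j ∨ isSCA G s j k :=
  sca_totally_ordered_general G s h hreach j k hj hk hjk
end

section
/- If j is a strong critical ancestor of i, then the critical descendant set of i is contained in the critical descendant set of j: V_i ⊆ V_j. -/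
theorem SimpleGraph.Walk.mem_support_of_forall_mem_support {V : Type*} {G : SimpleGraph V}
    {s i j y : V} (hj : ∀ p : G.Walk s i, j ∈ p.support)
    (hi : ∀ p : G.Walk s y, i ∈ p.support) (p : G.Walk s y) : j ∈ p.support := by
  classical
  exact p.support_takeUntil_subset_support (hi p) (hj (p.takeUntil i (hi p)))

theorem critDesc_subset_of_sca_general {V : Type*}
    (G : SimpleGraph V) (s i j : V) (hji : isSCA G s i j) :
    critDesc G s i ⊆ critDesc G s j := by
  obtain ⟨-, -, hj⟩ := hji
  rintro y (hy | rfl)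
  · exact Or.inl (SimpleGraph.Walk.mem_support_of_forall_mem_support hj hy)
  · exact Or.inl hj

/-- If `j` is a strong critical ancestor of `i`, then the critical descendant set of `i`
is contained in that of `j`. -/
theorem critDesc_subset_of_sca {V : Type*} [Fintype V]
    (G : SimpleGraph V) (s i j : V) (hji : isSCA G s i j) :
    critDesc G s i ⊆ critDesc G s j :=
  critDesc_subset_of_sca_general G s i j hji
end

section
/- For a buyer c_j in the strong critical ancestor sequence of the winner, removing c_j from the network disconnects strictly more buyers from s than removing the set {c_{j+1}} ∪ M_{c_j c_{j+1}} does; formally, the set of buyers still connected to s after removing {c_{j+1}} ∪ M_{c_j c_{j+1}} contains the set of buyers still connected to s after removing c_j. Consequently, the highest reported valuation among buyers connected without {c_{j+1}} ∪ M_{c_j c_{j+1}} is at least the highest reported valuation among buyers connected without c_j. -/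
section

variable {V : Type*} {G : SimpleGraph V} {s x y : V}

theorem SimpleGraph.Walk.notMem_support_of_mem_critDesc [DecidableEq V] {p : G.Walk s y}
    (hx : x ∉ p.support) {d : V} (hd : d ∈ critDesc G s x) : d ∉ p.support := by
  intro hdp
  rcases hd with hthrough | rfl
  · exact hx (p.support_takeUntil_subset_support hdp (hthrough (p.takeUntil d hdp)))
  · exact hx hdp

theorem remConn_singleton_subset_of_subset_critDesc {D : Set V} (hD : D ⊆ critDesc G s x) :
    remConn G s {x} ⊆ remConn G s D := by
  classical
  rintro y ⟨hys, -, p, hp⟩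
  have havoid : ∀ d ∈ D, d ∉ p.support := fun d hd =>
    p.notMem_support_of_mem_critDesc (hp x rfl) (hD hd)
  exact ⟨hys, fun hy => havoid y hy p.end_mem_support, p, havoid⟩

theorem v1_mono_of_remConn_subset [Finite V] (v : V → ℝ) {D D' : Set V}
    (h : remConn G s D ⊆ remConn G s D') : v1 G s v D ≤ v1 G s v D' :=
  csSup_le_csSup (Set.toFinite _).bddAbove (Set.insert_nonempty _ _)
    (Set.insert_subset_insert (Set.image_mono h))

end

/-- Removing `{c_{j+1}} ∪ M_{c_j c_{j+1}}` (a subset of the critical descendant set of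
`c_j`) disconnects fewer buyers than removing `c_j`: the buyers connected without
`{c_next} ∪ M` include all buyers connected without `c_j`, and consequently the highest
remaining valuation without `{c_next} ∪ M` is at least that without `c_j`. -/
theorem remove_next_set_keeps_more_connected {V : Type*} [Fintype V]
    (G : SimpleGraph V) (s : V) (v : V → ℝ)
    (cj cnext : V) (M : Set V)
    (hdesc : ({cnext} : Set V) ∪ M ⊆ critDesc G s cj) :
    remConn G s {cj} ⊆ remConn G s (({cnext} : Set V) ∪ M) ∧
    v1 G s v {cj} ≤ v1 G s v (({cnext} : Set V) ∪ M) := by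
  have hconn := remConn_singleton_subset_of_subset_critDesc hdesc
  exact ⟨hconn, v1_mono_of_remConn_subset v hconn⟩
end

section
/- The seller's revenue under IDM is at least the revenue of the second-price (VCG) auction held only among the seller's direct neighbours: v^{1st}_{N_{-c_1}} ≥ v^{2nd}_{r_s}, where v^{2nd}_{r_s} is the second-highest valuation among s's neighbours. -/
/-- The second-highest valuation over a set of buyers (0 if fewer than two buyers):
the supremum over distinct pairs of the smaller of the two valuations. -/
noncomputable def secondPrice {V : Type*} (v : V → ℝ) (D : Set V) : ℝ :=
  sSup (insert 0 {x | ∃ i ∈ D, ∃ j ∈ D, i ≠ j ∧ x = min (v i) (v j)})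

/-! Of two distinct neighbours of `s` at least one differs from `c1`; it stays adjacent to `s`
once `c1` is removed, so it bounds the smaller of their two valuations by `v1_{N_{-c1}}`. -/

section Auction

variable {V : Type*} (v : V → ℝ)

theorem secondPrice_le_of_forall_ne {D : Set V} {B : ℝ} (c : V) (hB : 0 ≤ B)
    (h : ∀ i ∈ D, i ≠ c → v i ≤ B) : secondPrice v D ≤ B := by
  refine Real.sSup_le ?_ hB
  rintro x (rfl | ⟨i, hi, j, hj, hij, rfl⟩)
  · exact hB
  · rcases eq_or_ne i c with rfl | hic
    · exact (min_le_right _ _).trans (h j hj (Ne.symm hij))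
    · exact (min_le_left _ _).trans (h i hi hic)

variable [Finite V] (G : SimpleGraph V) (s : V) (D : Set V)

theorem bddAbove_v1_set : BddAbove (insert 0 (v '' remConn G s D)) :=
  ((Set.toFinite _).image v |>.insert 0).bddAbove

theorem v1_nonneg : 0 ≤ v1 G s v D :=
  le_csSup (bddAbove_v1_set v G s D) (Set.mem_insert 0 _)

theorem le_v1_of_mem_remConn {y : V} (hy : y ∈ remConn G s D) : v y ≤ v1 G s v D :=
  le_csSup (bddAbove_v1_set v G s D) (Set.mem_insert_of_mem _ ⟨y, hy, rfl⟩)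

end Auction

theorem mem_remConn_of_adj {V : Type*} {G : SimpleGraph V} {s w : V} {D : Set V}
    (hsw : G.Adj s w) (hs : s ∉ D) (hw : w ∉ D) : w ∈ remConn G s D := by
  refine ⟨hsw.ne', hw, hsw.toWalk, fun d hd hdp => ?_⟩
  rcases List.mem_pair.mp (by simpa using hdp) with rfl | rfl
  exacts [hs hd, hw hd]

theorem idm_revenue_ge_vcg_among_neighbors_general {V : Type*} [Fintype V]
    (G : SimpleGraph V) (s : V) (v : V → ℝ) (c1 : V)
    (hc1 : G.Adj s c1) :
    secondPrice v (G.neighborSet s) ≤ v1 G s v {c1} :=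
  secondPrice_le_of_forall_ne v c1 (v1_nonneg v G s {c1}) fun _ hi hic =>
    le_v1_of_mem_remConn v G s {c1} <|
      mem_remConn_of_adj hi (Set.notMem_singleton_iff.mpr hc1.ne) (Set.notMem_singleton_iff.mpr hic)

/-- The seller's IDM revenue `v1_{N_{-c_1}}` is at least the revenue of the second-price
auction held only among the seller's neighbours. -/
theorem idm_revenue_ge_vcg_among_neighbors {V : Type*} [Fintype V]
    (G : SimpleGraph V) (s : V) (v : V → ℝ) (c1 : V)
    (hc1 : G.Adj s c1) (hv : ∀ i, 0 ≤ v i) :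
    secondPrice v (G.neighborSet s) ≤ v1 G s v {c1} :=
  idm_revenue_ge_vcg_among_neighbors_general G s v c1 hc1
end

section
/- In FDM, the total utility received by the weak critical ancestors in M_{c_{j-1}c_j} together with the reward to c_j is at most the difference v^{1st}_{N_{-c_j}} − v^{1st}_{N_{-({c_j} ∪ M_{c_{j-1}c_j})}} being redistributed; i.e., Σ_{i ∈ M_{c_{j-1}c_j} ∪ {c_j}} R_i ≤ v^{1st}_{N_{-c_j}} − v^{1st}_{N_{-({c_j} ∪ M_{c_{j-1}c_j})}}, so the seller's remainder from this segment is non-negative. -/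
theorem remConn_antitone {V : Type*} (G : SimpleGraph V) (s : V) :
    Antitone (remConn G s) := by
  rintro D₁ D₂ hD y ⟨hys, hyD, p, hp⟩
  exact ⟨hys, fun hy => hyD (hD hy), p, fun d hd => hp d (hD hd)⟩

theorem v1_antitone {V : Type*} [Finite V] (G : SimpleGraph V) (s : V) (v : V → ℝ) :
    Antitone (v1 G s v) := fun _ _ hD =>
  csSup_le_csSup (Set.toFinite _).bddAbove (Set.insert_nonempty _ _)
    (Set.insert_subset_insert (Set.image_mono (remConn_antitone G s hD)))

/-- The total FDM reward redistributed between consecutive strong critical ancestors is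
at most the difference being redistributed: each recipient `i ∈ M ∪ {c_j}` gets
`(v1_{N_{-S_i}} - v1_{N_{-({c_j} ∪ M)}}) / (|M| + 1)` with `c_j ∈ S_i ⊆ {c_j} ∪ M`, so
the rewards sum to at most `v1_{N_{-c_j}} - v1_{N_{-({c_j} ∪ M)}}` and the seller's
remainder from this segment is non-negative. -/
theorem fdm_segment_rewards_le_difference {V : Type*} [Fintype V] [DecidableEq V]
    (G : SimpleGraph V) (s : V) (v : V → ℝ)
    (cj : V) (M : Finset V) (hcj : cj ∉ M)
    (S : V → Set V) (R : V → ℝ)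
    (hS : ∀ i ∈ insert cj M, cj ∈ S i ∧ S i ⊆ ({cj} : Set V) ∪ ↑M)
    (hR : ∀ i ∈ insert cj M,
      R i = (v1 G s v (S i) - v1 G s v (({cj} : Set V) ∪ ↑M)) / (M.card + 1)) :
    ∑ i ∈ insert cj M, R i
      ≤ v1 G s v {cj} - v1 G s v (({cj} : Set V) ∪ ↑M) := by
  set Δ := v1 G s v {cj} - v1 G s v (({cj} : Set V) ∪ ↑M)
  have hR_le : ∀ i ∈ insert cj M, R i ≤ Δ / (M.card + 1) := fun i hi => by
    rw [hR i hi]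
    gcongr
    exact sub_le_sub_right (v1_antitone G s v (Set.singleton_subset_iff.mpr (hS i hi).1)) _
  calc ∑ i ∈ insert cj M, R i ≤ (insert cj M).card • (Δ / (M.card + 1)) :=
        Finset.sum_le_card_nsmul _ _ _ hR_le
    _ = Δ := by
        rw [Finset.card_insert_of_notMem hcj, nsmul_eq_mul]
        push_cast
        field_simp
end
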